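/- arXiv:2206.02001 — 3 statements merged into one kernel-verified Lean document; each statement's English description precedes it below -/
import Mathlib

section
/- Let δ > 0, λ > 0, and let I, u, v : ℝ → ℝ be smooth compactly supported functions. Define the Beltrami loss L(u) = ∫_ℝ [ (λ/2)(I(x) − u(x))² + (√(u'(x)² + δ²) − δ) ] dx. Then the function ε ↦ L(u + εv) is differentiable at ε = 0 with derivative ∫_ℝ [ λ(u(x) − I(x))·v(x) + (u'(x)/√(u'(x)² + δ²))·v'(x) ] dx, and by integration by parts this equals −∫_ℝ [ (d/dx)(u'(x)/√(u'(x)² + δ²)) + λ(I(x) − u(x)) ]·v(x) dx. In particular, the Beltrami reaction–diffusion PDE ∂_t u = ∂_x(∂_x u/√((∂_x u)² + δ²)) + λ(I − u) is the gradient descent flow of L. -/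
open MeasureTheory

/-- The Beltrami loss `L(u) = ∫ (λ/2)(I−u)² + (√(u'² + δ²) − δ) dx`. -/
noncomputable def beltramiLoss (δ lam : ℝ) (I u : ℝ → ℝ) : ℝ :=
  ∫ x : ℝ, (lam / 2 * (I x - u x) ^ 2 + (Real.sqrt ((deriv u x) ^ 2 + δ ^ 2) - δ))

/-- First variation of the Beltrami loss: `ε ↦ L(u + εv)` is differentiable at `ε = 0`
with derivative `∫ λ(u−I)·v + (u'/√(u'²+δ²))·v'`, and by integration by parts this equals
`−∫ [(u'/√(u'²+δ²))' + λ(I−u)]·v`; i.e. the Beltrami reaction–diffusion PDE is the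
gradient descent flow of `L`. -/
theorem beltrami_first_variation (δ lam : ℝ) (hδ : 0 < δ) (hlam : 0 < lam)
    (I u v : ℝ → ℝ)
    (hI : ContDiff ℝ (⊤ : ℕ∞) I) (hIc : HasCompactSupport I)
    (hu : ContDiff ℝ (⊤ : ℕ∞) u) (huc : HasCompactSupport u)
    (hv : ContDiff ℝ (⊤ : ℕ∞) v) (hvc : HasCompactSupport v) :
    HasDerivAt (fun ε : ℝ => beltramiLoss δ lam I (fun x => u x + ε * v x))
      (∫ x : ℝ, (lam * (u x - I x) * v x +
        deriv u x / Real.sqrt ((deriv u x) ^ 2 + δ ^ 2) * deriv v x)) 0 ∧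
    (∫ x : ℝ, (lam * (u x - I x) * v x +
        deriv u x / Real.sqrt ((deriv u x) ^ 2 + δ ^ 2) * deriv v x)) =
      -∫ x : ℝ, (deriv (fun y => deriv u y / Real.sqrt ((deriv u y) ^ 2 + δ ^ 2)) x +
        lam * (I x - u x)) * v x := by
  have hIct : Continuous I := hI.continuous
  have huct : Continuous u := hu.continuous
  have hvct : Continuous v := hv.continuous
  have hu'c : Continuous (deriv u) := hu.continuous_deriv (by simp)
  have hv'c : Continuous (deriv v) := hv.continuous_deriv (by simp)
  have hudiff : Differentiable ℝ u := hu.differentiable (by simp)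
  have hvdiff : Differentiable ℝ v := hv.differentiable (by simp)
  -- positivity of the expression under sqrt
  have hspos : ∀ a : ℝ, 0 < a ^ 2 + δ ^ 2 := fun a => by positivity
  have hsqpos : ∀ a : ℝ, 0 < Real.sqrt (a ^ 2 + δ ^ 2) :=
    fun a => Real.sqrt_pos.mpr (hspos a)
  -- derivative of the perturbed function
  have hderiv_pert : ∀ ε x : ℝ,
      deriv (fun y => u y + ε * v y) x = deriv u x + ε * deriv v x := by
    intro ε x
    have h := ((hudiff x).hasDerivAt.add
      (((hvdiff x).hasDerivAt).const_mul ε)).deriv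
    exact h
  set F : ℝ → ℝ → ℝ := fun ε x =>
    lam / 2 * (I x - (u x + ε * v x)) ^ 2 +
      (Real.sqrt ((deriv u x + ε * deriv v x) ^ 2 + δ ^ 2) - δ) with hF
  set F' : ℝ → ℝ → ℝ := fun ε x =>
    lam * (u x + ε * v x - I x) * v x +
      (deriv u x + ε * deriv v x) /
        Real.sqrt ((deriv u x + ε * deriv v x) ^ 2 + δ ^ 2) * deriv v x with hF'
  have hLoss : ∀ ε : ℝ,
      beltramiLoss δ lam I (fun x => u x + ε * v x) = ∫ x : ℝ, F ε x := by
    intro ε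
    unfold beltramiLoss
    congr 1
    funext x
    rw [hderiv_pert ε x]
  -- compact support facts
  have hK : IsCompact (tsupport I ∪ tsupport u ∪ tsupport v ∪
      tsupport (deriv u) ∪ tsupport (deriv v)) :=
    ((((hIc.union huc).union hvc).union huc.deriv).union hvc.deriv)
  have hKmem : ∀ x, x ∉ (tsupport I ∪ tsupport u ∪ tsupport v ∪
      tsupport (deriv u) ∪ tsupport (deriv v)) →
      I x = 0 ∧ u x = 0 ∧ v x = 0 ∧ deriv u x = 0 ∧ deriv v x = 0 := by
    intro x hx
    simp only [Set.mem_union, not_or] at hx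
    exact ⟨image_eq_zero_of_notMem_tsupport hx.1.1.1.1,
      image_eq_zero_of_notMem_tsupport hx.1.1.1.2,
      image_eq_zero_of_notMem_tsupport hx.1.1.2,
      image_eq_zero_of_notMem_tsupport hx.1.2,
      image_eq_zero_of_notMem_tsupport hx.2⟩
  have hFc : ∀ ε : ℝ, HasCompactSupport (F ε) := by
    intro ε
    apply HasCompactSupport.intro hK
    intro x hx
    obtain ⟨h1, h2, h3, h4, h5⟩ := hKmem x hx
    simp only [hF, h1, h2, h3, h4, h5, mul_zero, add_zero, zero_add, sub_zero,
      zero_pow, ne_eq, OfNat.ofNat_ne_zero, not_false_eq_true, zero_add]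
    rw [Real.sqrt_sq hδ.le]
    ring
  have hFcont : ∀ ε : ℝ, Continuous (F ε) := by
    intro ε
    apply Continuous.add
    · exact (continuous_const.mul ((hIct.sub (huct.add
        (continuous_const.mul hvct))).pow 2))
    · exact ((Real.continuous_sqrt.comp
        (((hu'c.add (continuous_const.mul hv'c)).pow 2).add
          continuous_const)).sub continuous_const)
  have hFint : ∀ ε : ℝ, Integrable (F ε) :=
    fun ε => (hFcont ε).integrable_of_hasCompactSupport (hFc ε)
  have hF'cont : ∀ ε : ℝ, Continuous (F' ε) := by
    intro ε
    apply Continuous.add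
    · exact (continuous_const.mul ((huct.add
        (continuous_const.mul hvct)).sub hIct)).mul hvct
    · refine Continuous.mul (Continuous.div (hu'c.add (continuous_const.mul hv'c))
        (Real.continuous_sqrt.comp
          (((hu'c.add (continuous_const.mul hv'c)).pow 2).add continuous_const))
        fun x => ?_) hv'c
      exact (hsqpos _).ne'
  -- bound
  set bound : ℝ → ℝ := fun x =>
    lam * (|u x| + |v x| + |I x|) * |v x| + |deriv v x| with hbound
  have hbound_cont : Continuous bound :=
    ((continuous_const.mul ((huct.abs.add hvct.abs).add hIct.abs)).mul
      hvct.abs).add hv'c.abs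
  have hbound_supp : HasCompactSupport bound := by
    apply HasCompactSupport.intro hK
    intro x hx
    obtain ⟨h1, h2, h3, h4, h5⟩ := hKmem x hx
    simp [hbound, h1, h2, h3, h5]
  have hbound_int : Integrable bound :=
    hbound_cont.integrable_of_hasCompactSupport hbound_supp
  have habs_div : ∀ a : ℝ, |a / Real.sqrt (a ^ 2 + δ ^ 2)| ≤ 1 := by
    intro a
    rw [abs_div, abs_of_pos (hsqpos a), div_le_one (hsqpos a)]
    calc |a| = Real.sqrt (a ^ 2) := by rw [Real.sqrt_sq_eq_abs]
    _ ≤ Real.sqrt (a ^ 2 + δ ^ 2) := Real.sqrt_le_sqrt (by nlinarith [sq_nonneg δ])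
  have h_bound : ∀ x : ℝ, ∀ ε ∈ Metric.ball (0 : ℝ) 1, ‖F' ε x‖ ≤ bound x := by
    intro x ε hε
    simp only [Metric.mem_ball, dist_zero_right, Real.norm_eq_abs] at hε
    simp only [hF', Real.norm_eq_abs]
    refine (abs_add_le _ _).trans (add_le_add ?_ ?_)
    · rw [abs_mul, abs_mul, abs_of_pos hlam]
      apply mul_le_mul_of_nonneg_right _ (abs_nonneg _)
      apply mul_le_mul_of_nonneg_left _ hlam.le
      calc |u x + ε * v x - I x| ≤ |u x| + |ε * v x| + |I x| := by
            refine (abs_sub _ _).trans ?_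
            exact add_le_add (abs_add_le _ _) le_rfl
      _ ≤ |u x| + |v x| + |I x| := by
            refine add_le_add_left (add_le_add_right ?_ _) _
            rw [abs_mul]
            exact mul_le_of_le_one_left (abs_nonneg _) hε.le
    · rw [abs_mul]
      calc _ ≤ 1 * |deriv v x| :=
            mul_le_mul_of_nonneg_right (habs_div _) (abs_nonneg _)
      _ = |deriv v x| := one_mul _
  -- pointwise derivative in ε
  have h_diff : ∀ x : ℝ, ∀ ε : ℝ, HasDerivAt (fun t => F t x) (F' ε x) ε := by
    intro x ε
    have h1 : HasDerivAt (fun t : ℝ => lam / 2 * (I x - (u x + t * v x)) ^ 2)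
        (lam * (u x + ε * v x - I x) * v x) ε := by
      have hlin : HasDerivAt (fun t : ℝ => I x - (u x + t * v x)) (-v x) ε := by
        simpa using ((hasDerivAt_mul_const (v x)).const_add (u x)).const_sub (I x)
      have := (hlin.pow 2).const_mul (lam / 2)
      exact this.congr_deriv (by ring)
    have h2 : HasDerivAt
        (fun t : ℝ => Real.sqrt ((deriv u x + t * deriv v x) ^ 2 + δ ^ 2) - δ)
        ((deriv u x + ε * deriv v x) /
          Real.sqrt ((deriv u x + ε * deriv v x) ^ 2 + δ ^ 2) * deriv v x) ε := by
      have hin : HasDerivAt (fun t : ℝ => (deriv u x + t * deriv v x) ^ 2 + δ ^ 2)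
          (2 * (deriv u x + ε * deriv v x) * deriv v x) ε := by
        have hl : HasDerivAt (fun t : ℝ => deriv u x + t * deriv v x) (deriv v x) ε :=
          (hasDerivAt_mul_const (deriv v x)).const_add (deriv u x)
        have := (hl.pow 2).add_const (δ ^ 2)
        exact this.congr_deriv (by ring)
      have hs := hin.sqrt (hspos _).ne'
      have := hs.sub_const δ
      exact this.congr_deriv (by field_simp)
    exact h1.add h2
  have key := hasDerivAt_integral_of_dominated_loc_of_deriv_le (μ := volume)
    (F := F) (F' := F') (x₀ := (0 : ℝ)) (bound := bound) (Metric.ball_mem_nhds 0 one_pos)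
    (Filter.Eventually.of_forall fun ε => ((hFcont ε).aestronglyMeasurable))
    (hFint 0) ((hF'cont 0).aestronglyMeasurable)
    (Filter.Eventually.of_forall fun x => h_bound x)
    hbound_int
    (Filter.Eventually.of_forall fun x => fun ε _ => h_diff x ε)
  -- identify the integrand at 0
  have hFeq : (∫ x : ℝ, F' 0 x) = ∫ x : ℝ, (lam * (u x - I x) * v x +
      deriv u x / Real.sqrt ((deriv u x) ^ 2 + δ ^ 2) * deriv v x) := by
    congr 1
    funext x
    simp [hF']
  constructor
  · have hd := key.2
    rw [hFeq] at hd
    simp only [hLoss]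
    exact hd
  -- integration by parts
  · set g : ℝ → ℝ := fun y => deriv u y / Real.sqrt ((deriv u y) ^ 2 + δ ^ 2) with hg
    have hu'cd : ContDiff ℝ 1 (deriv u) :=
      (contDiff_succ_iff_deriv.mp (show ContDiff ℝ (1 + 1) u from hu.of_le (WithTop.coe_le_coe.mpr le_top))).2.2
    have hgcd : ContDiff ℝ 1 g := by
      rw [contDiff_iff_contDiffAt]
      intro x
      refine (hu'cd.contDiffAt).div ?_ (hsqpos _).ne'
      exact ContDiffAt.sqrt (((hu'cd.contDiffAt).pow 2).add contDiffAt_const)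
        (hspos _).ne'
    have hgdiff : Differentiable ℝ g := hgcd.differentiable one_ne_zero
    have hgc : HasCompactSupport g := by
      apply HasCompactSupport.intro huc.deriv
      intro x hx
      simp [hg, image_eq_zero_of_notMem_tsupport hx]
    have hgcont : Continuous g := hgcd.continuous
    have hg'cont : Continuous (deriv g) := hgcd.continuous_deriv le_rfl
    have ibp : (∫ x : ℝ, g x * deriv v x) = -∫ x : ℝ, deriv g x * v x := by
      apply integral_mul_deriv_eq_deriv_mul_of_integrable
        (fun x _ => (hgdiff x).hasDerivAt) (fun x _ => (hvdiff x).hasDerivAt)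
      · exact ((hgcont.mul hv'c).integrable_of_hasCompactSupport
          (hvc.deriv.mul_left))
      · exact ((hg'cont.mul hvct).integrable_of_hasCompactSupport
          (hvc.mul_left))
      · exact ((hgcont.mul hvct).integrable_of_hasCompactSupport
          (hvc.mul_left))
    have hA : Integrable (fun x : ℝ => lam * (u x - I x) * v x) :=
      (((continuous_const.mul (huct.sub hIct)).mul hvct).integrable_of_hasCompactSupport
        hvc.mul_left)
    have hB : Integrable (fun x : ℝ => g x * deriv v x) :=
      ((hgcont.mul hv'c).integrable_of_hasCompactSupport hvc.deriv.mul_left)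
    have hC : Integrable (fun x : ℝ => deriv g x * v x) :=
      ((hg'cont.mul hvct).integrable_of_hasCompactSupport hvc.mul_left)
    have hD : Integrable (fun x : ℝ => lam * (I x - u x) * v x) :=
      (((continuous_const.mul (hIct.sub huct)).mul hvct).integrable_of_hasCompactSupport
        hvc.mul_left)
    calc (∫ x : ℝ, (lam * (u x - I x) * v x + g x * deriv v x))
        = (∫ x : ℝ, lam * (u x - I x) * v x) + ∫ x : ℝ, g x * deriv v x :=
          integral_add hA hB
      _ = (∫ x : ℝ, lam * (u x - I x) * v x) - ∫ x : ℝ, deriv g x * v x := by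
          rw [ibp]; ring
      _ = -((∫ x : ℝ, deriv g x * v x) + ∫ x : ℝ, lam * (I x - u x) * v x) := by
          have : (∫ x : ℝ, lam * (I x - u x) * v x)
              = -∫ x : ℝ, lam * (u x - I x) * v x := by
            rw [← integral_neg]
            congr 1
            funext x
            ring
          rw [this]; ring
      _ = -∫ x : ℝ, (deriv g x + lam * (I x - u x)) * v x := by
          rw [← integral_add hC hD]
          congr 1
          apply integral_congr_ae
          filter_upwards with x
          ring
end

section
/- Let Δt > 0, β > 0, a < 0, α ∈ ℝ, let Ω be a nonempty finite set, and let g : Ω → ℝ satisfy g(ω) ≥ 0 for all ω. Then the amplifier condition |1 − Δt·(α + (1/2)·a·β·g(ω))| < 1 holds for all ω ∈ Ω if and only if α > −(1/2)·a·β·max_{ω∈Ω} g(ω) and α < 2/Δt − (1/2)·a·β·min_{ω∈Ω} g(ω). -/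
/-! The amplifier `1 - Δt x` has modulus below one exactly when `0 < x < 2 / Δt`. Since
`a β < 0`, the rate `x = α + (1/2) a β g(ω)` is antitone in `g(ω)`, so it is smallest where `g`
is largest and largest where `g` is smallest; both extrema are attained on the finite set `Ω`. -/

open Finset

theorem abs_one_sub_mul_lt_one_iff {h x : ℝ} (hh : 0 < h) :
    |1 - h * x| < 1 ↔ 0 < x ∧ x < 2 / h := by
  rw [abs_sub_lt_iff, lt_div_iff₀ hh, mul_comm x h]
  constructor
  · rintro ⟨hpos, hlt⟩
    exact ⟨pos_of_mul_pos_right (by linarith) hh.le, by linarith⟩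
  · rintro ⟨hpos, hlt⟩
    exact ⟨by linarith [mul_pos hh hpos], by linarith⟩

section Extremum

variable {ι α β : Type*} [LinearOrder α] [Preorder β] {s : Finset ι} (hs : s.Nonempty)
  {f : ι → α} {φ : α → β} {b : β}

theorem Antitone.forall_lt_comp_iff_lt_comp_sup' (hφ : Antitone φ) :
    (∀ i ∈ s, b < φ (f i)) ↔ b < φ (s.sup' hs f) := by
  obtain ⟨i, hi, hsup⟩ := s.exists_mem_eq_sup' hs f
  exact ⟨fun h ↦ hsup ▸ h i hi, fun h j hj ↦ h.trans_le (hφ (s.le_sup' f hj))⟩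

theorem Antitone.forall_comp_lt_iff_comp_inf'_lt (hφ : Antitone φ) :
    (∀ i ∈ s, φ (f i) < b) ↔ φ (s.inf' hs f) < b :=
  hφ.dual.forall_lt_comp_iff_lt_comp_sup' hs

end Extremum

theorem cnn_gd_stability_bounds_general (Δt β a α : ℝ) (hΔt : 0 < Δt) (hβ : 0 < β) (ha : a < 0)
    (Ω : Type*) [Fintype Ω] [Nonempty Ω] (g : Ω → ℝ) :
    (∀ ω : Ω, |1 - Δt * (α + 1 / 2 * a * β * g ω)| < 1) ↔
      (α > -(1 / 2) * a * β * (univ.sup' univ_nonempty g) ∧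
        α < 2 / Δt - 1 / 2 * a * β * (univ.inf' univ_nonempty g)) := by
  have hφ : Antitone fun t : ℝ ↦ α + 1 / 2 * a * β * t :=
    (antitone_mul_left (by nlinarith)).const_add α
  have hpos := hφ.forall_lt_comp_iff_lt_comp_sup' (f := g) (b := 0) univ_nonempty
  have hlt := hφ.forall_comp_lt_iff_comp_inf'_lt (f := g) (b := 2 / Δt) univ_nonempty
  simp only [mem_univ, true_imp_iff] at hpos hlt
  simp only [abs_one_sub_mul_lt_one_iff hΔt, forall_and, hpos, hlt]
  constructor <;> rintro ⟨h₁, h₂⟩ <;> constructor <;> linarith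

/-- Stability criterion for the discretized linearized gradient descent PDE of the
one-layer CNN: the amplifier condition `|1 − Δt·(α + (1/2)·a·β·g(ω))| < 1` holds at all
frequencies iff the weight decay satisfies
`−(1/2)aβ·max g < α < 2/Δt − (1/2)aβ·min g`. -/
theorem cnn_gd_stability_bounds (Δt β a α : ℝ) (hΔt : 0 < Δt) (hβ : 0 < β) (ha : a < 0)
    (Ω : Type*) [Fintype Ω] [Nonempty Ω] (g : Ω → ℝ) (hg : ∀ ω : Ω, 0 ≤ g ω) :
    (∀ ω : Ω, |1 - Δt * (α + 1 / 2 * a * β * g ω)| < 1) ↔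
      (α > -(1 / 2) * a * β * (univ.sup' univ_nonempty g) ∧
        α < 2 / Δt - 1 / 2 * a * β * (univ.inf' univ_nonempty g)) :=
  cnn_gd_stability_bounds_general Δt β a α hΔt hβ ha Ω g
end

section
/- Let d > 0 and Δt > 0 with d·Δt < 2, let z > 0, and set μ = (2 − dΔt)/(2 + dΔt) and γ = 2Δt²/(2 + dΔt). If Δt < 2/√(3z), then every complex root λ of the characteristic polynomial λ² − (1 + μ)·(1 − γz)·λ + μ·(1 − γz) satisfies |λ| < 1. Consequently, every complex sequence satisfying the two-step Nesterov recursion x_{n+1} = (1 + μ)·(1 − γz)·x_n − μ·(1 − γz)·x_{n−1} converges to 0. -/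
/-!
By the Schur–Cohn criterion, the roots of a real quadratic `λ² - bλ + c` lie in the open unit
disk when `c < 1` and `|b| < 1 + c`. For `b = (1 + μ)w`, `c = μw` with `w = 1 - γz` these read
`μw < 1`, `w < 1` and `-(1 + 2μ)w < 1`, which hold once `|μ| < 1` and `-1/3 < w < 1`: the
damping gives `|μ| < 1`, and the CFL condition gives `γz < Δt²z < 4/3`. A solution of the
recursion with characteristic roots `l₁, l₂` satisfies `x (n+1) - l₁ x n = l₂ⁿ (x 1 - l₁ x 0)`,
so `‖x n‖ = O(n rⁿ)` with `r = max ‖l₁‖ ‖l₂‖ < 1`.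
-/

open Filter Topology

theorem Complex.norm_lt_one_of_sq_sub_mul_add_eq_zero {b c : ℝ} (hc : c < 1)
    (hb : |b| < 1 + c) {lam : ℂ} (h : lam ^ 2 - b * lam + c = 0) : ‖lam‖ < 1 := by
  have hre : lam.re * lam.re - lam.im * lam.im - b * lam.re + c = 0 := by
    simpa [sq] using congrArg Complex.re h
  have him : lam.re * lam.im + lam.im * lam.re - b * lam.im = 0 := by
    simpa [sq] using congrArg Complex.im h
  obtain ⟨hb₁, hb₂⟩ := abs_lt.1 hb
  rw [← sq_lt_one_iff₀ (norm_nonneg _), Complex.sq_norm, Complex.normSq_apply]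
  rcases mul_eq_zero.1 (show lam.im * (2 * lam.re - b) = 0 by linear_combination him) with
    hreal | hvertex
  · -- a real root: the quadratic is positive at `±1` and its vertex `b / 2` lies in `(-1, 1)`
    rw [hreal] at hre ⊢
    have : -1 < lam.re := by nlinarith
    have : lam.re < 1 := by nlinarith
    nlinarith
  · -- a non-real root: `2 re λ = b` turns the real part of the equation into `|λ|² = c`
    nlinarith

theorem tendsto_zero_of_le_mul_add_pow {u : ℕ → ℝ} {r C : ℝ} (hr₀ : 0 ≤ r) (hr₁ : r < 1)
    (hu : ∀ n, 0 ≤ u n) (h : ∀ n, u (n + 1) ≤ r * u n + C * r ^ (n + 1)) :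
    Tendsto u atTop (𝓝 0) := by
  have hbound : ∀ n : ℕ, u n ≤ u 0 * r ^ n + C * (n * r ^ n) := by
    intro n
    induction n with
    | zero => simp
    | succ n ih =>
      calc u (n + 1) ≤ r * u n + C * r ^ (n + 1) := h n
        _ ≤ r * (u 0 * r ^ n + C * (n * r ^ n)) + C * r ^ (n + 1) := by gcongr
        _ = u 0 * r ^ (n + 1) + C * ((n + 1 : ℕ) * r ^ (n + 1)) := by push_cast; ring
  have hlim : Tendsto (fun n : ℕ => u 0 * r ^ n + C * (n * r ^ n)) atTop (𝓝 0) := by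
    simpa using ((tendsto_pow_atTop_nhds_zero_of_lt_one hr₀ hr₁).const_mul (u 0)).add
      ((tendsto_self_mul_const_pow_of_lt_one hr₀ hr₁).const_mul C)
  exact squeeze_zero hu hbound hlim

theorem tendsto_zero_of_factored_recurrence {R : Type*} [NormedCommRing R] {l₁ l₂ : R}
    (h₁ : ‖l₁‖ < 1) (h₂ : ‖l₂‖ < 1) {x : ℕ → R}
    (hx : ∀ n, x (n + 2) = (l₁ + l₂) * x (n + 1) - l₁ * l₂ * x n) :
    Tendsto x atTop (𝓝 0) := by
  set r := max ‖l₁‖ ‖l₂‖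
  set y : ℕ → R := fun n => x (n + 1) - l₁ * x n
  have hy : ∀ n, y (n + 1) = l₂ * y n := fun n => by
    simp only [y, hx]; ring
  have hy_le : ∀ n, ‖y n‖ ≤ ‖y 0‖ * r ^ n := by
    intro n
    induction n with
    | zero => simp
    | succ n ih =>
      calc ‖y (n + 1)‖ ≤ ‖l₂‖ * ‖y n‖ := hy n ▸ norm_mul_le _ _
        _ ≤ r * (‖y 0‖ * r ^ n) := by gcongr; exact le_max_right _ _
        _ = ‖y 0‖ * r ^ (n + 1) := by ring
  have hstep : ∀ n, ‖x (n + 2)‖ ≤ r * ‖x (n + 1)‖ + ‖y 0‖ * r ^ (n + 1) := by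
    intro n
    have hsplit : x (n + 2) = l₁ * x (n + 1) + y (n + 1) := by simp only [y]; ring
    calc ‖x (n + 2)‖ ≤ ‖l₁‖ * ‖x (n + 1)‖ + ‖y (n + 1)‖ :=
          hsplit ▸ (norm_add_le _ _).trans (add_le_add_left (norm_mul_le _ _) _)
      _ ≤ r * ‖x (n + 1)‖ + ‖y 0‖ * r ^ (n + 1) := by
          gcongr
          · exact le_max_left _ _
          · exact hy_le _
  have hshift : Tendsto (fun n => ‖x (n + 1)‖) atTop (𝓝 0) :=
    tendsto_zero_of_le_mul_add_pow (by positivity) (max_lt h₁ h₂) (fun _ => norm_nonneg _) hstep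
  exact tendsto_zero_iff_norm_tendsto_zero.2 ((tendsto_add_atTop_iff_nat 1).1 hshift)

theorem Complex.tendsto_zero_of_recurrence {b c : ℂ}
    (hroots : ∀ lam : ℂ, lam ^ 2 - b * lam + c = 0 → ‖lam‖ < 1) {x : ℕ → ℂ}
    (hx : ∀ n, x (n + 2) = b * x (n + 1) - c * x n) :
    Tendsto x atTop (𝓝 0) := by
  obtain ⟨l₁, l₂, rfl, rfl⟩ : ∃ l₁ l₂ : ℂ, l₁ + l₂ = b ∧ l₁ * l₂ = c := by
    obtain ⟨s, hs⟩ := IsAlgClosed.exists_pow_nat_eq (b ^ 2 - 4 * c) two_pos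
    exact ⟨(b + s) / 2, (b - s) / 2, by ring, by linear_combination -hs / 4⟩
  exact tendsto_zero_of_factored_recurrence (hroots _ (by ring)) (hroots _ (by ring)) hx

theorem abs_sub_div_add_lt_one {s a : ℝ} (hs : 0 < s) (ha : 0 < a) :
    |(s - a) / (s + a)| < 1 := by
  rw [abs_div, abs_of_pos (by positivity : 0 < s + a), div_lt_one (by positivity), abs_lt]
  constructor <;> linarith

theorem sq_mul_lt_sq_of_lt_div_sqrt {t a c : ℝ} (ht : 0 ≤ t) (ha : 0 < a) (h : t < c / √a) :
    t ^ 2 * a < c ^ 2 := by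
  have hsa : 0 < √a := Real.sqrt_pos.2 ha
  rw [lt_div_iff₀ hsa] at h
  calc t ^ 2 * a = (t * √a) ^ 2 := by rw [mul_pow, Real.sq_sqrt ha.le]
    _ < c ^ 2 := by gcongr

theorem schurCohn_of_abs_lt_one {μ w : ℝ} (hμ : |μ| < 1) (hw₀ : -(1 / 3) < w) (hw₁ : w < 1) :
    μ * w < 1 ∧ |(1 + μ) * w| < 1 + μ * w := by
  obtain ⟨hμ₀, hμ₁⟩ := abs_lt.1 hμ
  exact ⟨by nlinarith, abs_lt.2 ⟨by nlinarith, by nlinarith⟩⟩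

theorem nesterov_mode_stability_general (d Δt z μ γ : ℝ)
    (hd : 0 < d) (hΔt : 0 < Δt) (hz : 0 < z)
    (hμ : μ = (2 - d * Δt) / (2 + d * Δt)) (hγ : γ = 2 * Δt ^ 2 / (2 + d * Δt))
    (hCFL : Δt < 2 / Real.sqrt (3 * z)) :
    (∀ lam : ℂ, lam ^ 2 - (1 + (μ : ℂ)) * (1 - (γ : ℂ) * (z : ℂ)) * lam +
        (μ : ℂ) * (1 - (γ : ℂ) * (z : ℂ)) = 0 → ‖lam‖ < 1) ∧
    ∀ x : ℕ → ℂ,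
      (∀ n : ℕ, x (n + 2) = (1 + (μ : ℂ)) * (1 - (γ : ℂ) * (z : ℂ)) * x (n + 1) -
        (μ : ℂ) * (1 - (γ : ℂ) * (z : ℂ)) * x n) →
      Tendsto x atTop (nhds 0) := by
  have hμ_abs : |μ| < 1 := hμ ▸ abs_sub_div_add_lt_one two_pos (by positivity)
  have hγz_pos : 0 < γ * z := by rw [hγ]; positivity
  have hγz_lt : γ * z < 4 / 3 := by
    have hCFL_sq : Δt ^ 2 * (3 * z) < 2 ^ 2 :=
      sq_mul_lt_sq_of_lt_div_sqrt hΔt.le (by positivity) hCFL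
    rw [hγ, div_mul_eq_mul_div, div_lt_iff₀ (by positivity)]
    nlinarith [mul_pos (mul_pos hd hΔt) (mul_pos hz (sq_pos_of_pos hΔt))]
  obtain ⟨hc, hb⟩ :=
    schurCohn_of_abs_lt_one hμ_abs (w := 1 - γ * z) (by linarith) (by linarith)
  have hroots : ∀ lam : ℂ, lam ^ 2 - (1 + (μ : ℂ)) * (1 - (γ : ℂ) * (z : ℂ)) * lam +
      (μ : ℂ) * (1 - (γ : ℂ) * (z : ℂ)) = 0 → ‖lam‖ < 1 := fun lam h =>
    Complex.norm_lt_one_of_sq_sub_mul_add_eq_zero hc hb (by push_cast; exact h)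
  exact ⟨hroots, fun x hx => Complex.tendsto_zero_of_recurrence hroots hx⟩

/-- CFL condition for the semi-implicit (Nesterov) discretization: if
`Δt < 2/√(3z)` then every root of the characteristic polynomial
`λ² − (1+μ)(1−γz)λ + μ(1−γz)` of the two-step Nesterov recursion lies strictly inside
the unit disk, and consequently every complex sequence satisfying the recursion
`x_{n+1} = (1+μ)(1−γz)x_n − μ(1−γz)x_{n−1}` converges to 0. -/
theorem nesterov_mode_stability (d Δt z μ γ : ℝ)
    (hd : 0 < d) (hΔt : 0 < Δt) (hdΔt : d * Δt < 2) (hz : 0 < z)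
    (hμ : μ = (2 - d * Δt) / (2 + d * Δt)) (hγ : γ = 2 * Δt ^ 2 / (2 + d * Δt))
    (hCFL : Δt < 2 / Real.sqrt (3 * z)) :
    (∀ lam : ℂ, lam ^ 2 - (1 + (μ : ℂ)) * (1 - (γ : ℂ) * (z : ℂ)) * lam +
        (μ : ℂ) * (1 - (γ : ℂ) * (z : ℂ)) = 0 → ‖lam‖ < 1) ∧
    ∀ x : ℕ → ℂ,
      (∀ n : ℕ, x (n + 2) = (1 + (μ : ℂ)) * (1 - (γ : ℂ) * (z : ℂ)) * x (n + 1) -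
        (μ : ℂ) * (1 - (γ : ℂ) * (z : ℂ)) * x n) →
      Tendsto x atTop (nhds 0) :=
  nesterov_mode_stability_general d Δt z μ γ hd hΔt hz hμ hγ hCFL
end
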